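/- arXiv:2603.01986 — 2 statements merged into one kernel-verified Lean document; each statement's English description precedes it below -/
import Mathlib

section
/- Let X_1,…,X_n, Y_1,…,Y_n be independent random variables with X_i, Y_i ~ Polya(1/n, p) (negative binomial with parameter r = 1/n and success probability p). Then Z = ∑_{i=1}^n (X_i - Y_i) follows the discrete Laplace distribution DLap(p), i.e., P[Z = k] = ((1-p)/(1+p)) · p^{|k|} for all integers k. -/
open MeasureTheory ProbabilityTheory Finset

section Aux

open Polynomial

lemma asc_eval' (r : ℝ) (k : ℕ) :
    (ascPochhammer ℝ k).eval r = (-1 : ℝ)^k * ((k.factorial : ℝ) * Ring.choose (-r) k) := by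
  have h1 : (ascPochhammer ℝ k).eval r = (ascPochhammer ℕ k).smeval r := by
    rw [← ascPochhammer_smeval_eq_eval, ascPochhammer_smeval_cast]
  have h2 : (ascPochhammer ℕ k).smeval r = (-1 : ℝ)^k * (descPochhammer ℤ k).smeval (-r) := by
    have := ascPochhammer_smeval_neg_eq_descPochhammer (-r) k
    rw [neg_neg, Units.smul_def, Int.coe_negOnePow_natCast, zsmul_eq_mul] at this
    rw [this]; push_cast; ring
  rw [h1, h2, Ring.descPochhammer_eq_factorial_smul_choose, nsmul_eq_mul]

lemma gamma_asc' (r : ℝ) (hr : 0 < r) (k : ℕ) :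
    Real.Gamma (k + r) = (ascPochhammer ℝ k).eval r * Real.Gamma r := by
  induction k with
  | zero => simp
  | succ k ih =>
    have hne : (k : ℝ) + r ≠ 0 := by positivity
    have h : ((k : ℝ) + 1 + r) = ((k : ℝ) + r) + 1 := by ring
    rw [Nat.cast_succ, h, Real.Gamma_add_one hne, ih, ascPochhammer_succ_right]
    simp [Polynomial.eval_mul]
    ring

lemma g_eq' (r : ℝ) (hr : 0 < r) (k : ℕ) :
    Real.Gamma (k + r) / (k.factorial * Real.Gamma r)
      = (-1 : ℝ)^k * Ring.choose (-r) k := by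
  have hG : Real.Gamma r ≠ 0 := (Real.Gamma_pos_of_pos hr).ne'
  have hf : (k.factorial : ℝ) ≠ 0 := Nat.cast_ne_zero.mpr k.factorial_ne_zero
  rw [gamma_asc' r hr k, asc_eval']
  field_simp

lemma vander' (r s : ℝ) (k : ℕ) :
    ∑ ij ∈ antidiagonal k,
        ((-1 : ℝ)^ij.1 * Ring.choose (-r) ij.1) * ((-1 : ℝ)^ij.2 * Ring.choose (-s) ij.2)
      = (-1 : ℝ)^k * Ring.choose (-(r+s)) k := by
  have h : (-(r+s)) = (-r) + (-s) := by ring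
  rw [h, Ring.add_choose_eq k (Commute.all _ _), mul_sum]
  refine sum_congr rfl fun ij hij => ?_
  have hk : ij.1 + ij.2 = k := by simpa using hij
  rw [← hk, pow_add]
  ring

lemma conv' {Ω : Type*} [MeasureSpace Ω] [IsProbabilityMeasure (ℙ : Measure Ω)]
    (U V : Ω → ℕ) (hU : Measurable U) (hV : Measurable V)
    (h : IndepFun U V ℙ) (k : ℕ) :
    (ℙ {ω | U ω + V ω = k}).toReal
      = ∑ j ∈ range (k+1), (ℙ {ω | U ω = j}).toReal * (ℙ {ω | V ω = k - j}).toReal := by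
  have hset : {ω | U ω + V ω = k}
      = ⋃ j ∈ range (k+1), (U ⁻¹' {j} ∩ V ⁻¹' {k - j}) := by
    ext ω
    simp only [Set.mem_setOf_eq, Set.mem_iUnion, mem_range, Set.mem_inter_iff,
      Set.mem_preimage, Set.mem_singleton_iff]
    constructor
    · rintro rfl
      exact ⟨U ω, Nat.lt_succ_of_le (Nat.le_add_right _ _), rfl, by omega⟩
    · rintro ⟨j, hj, rfl, h2⟩
      omega
  have hmeas : ∀ j, MeasurableSet (U ⁻¹' {j} ∩ V ⁻¹' ({k - j} : Set ℕ)) :=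
    fun j => (hU (measurableSet_singleton j)).inter (hV (measurableSet_singleton _))
  rw [hset, measure_biUnion_finset ?_ (fun j _ => hmeas j)]
  · rw [ENNReal.toReal_sum (fun j _ => measure_ne_top _ _)]
    refine sum_congr rfl fun j _ => ?_
    rw [h.measure_inter_preimage_eq_mul _ _ (measurableSet_singleton j)
      (measurableSet_singleton _), ENNReal.toReal_mul]
    rfl
  · intro i _ j _ hij
    refine Set.disjoint_left.mpr fun ω hωi hωj => hij ?_
    rw [← hωi.1, ← hωj.1]

lemma sum_polya' {Ω : Type*} [MeasureSpace Ω] [IsProbabilityMeasure (ℙ : Measure Ω)]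
    {ι : Type*} (W : ι → Ω → ℕ) (hm : ∀ i, Measurable (W i))
    (hind : iIndepFun W ℙ)
    (ν p : ℝ) (hp1 : p < 1)
    (hdist : ∀ i k, (ℙ {ω | W i ω = k}).toReal
      = (-1 : ℝ)^k * Ring.choose (-ν) k * (1-p) ^ ν * p ^ k) :
    ∀ (t : Finset ι), t.Nonempty → ∀ k : ℕ,
      (ℙ {ω | ∑ i ∈ t, W i ω = k}).toReal
        = (-1 : ℝ)^k * Ring.choose (-((t.card : ℝ) * ν)) k
            * (1-p) ^ ((t.card : ℝ) * ν) * p ^ k := by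
  have h1p : (0:ℝ) < 1 - p := by linarith
  intro t ht
  induction ht using Finset.Nonempty.cons_induction with
  | singleton a =>
    intro k
    simp only [sum_singleton, card_singleton, Nat.cast_one, one_mul]
    exact hdist a k
  | cons a s ha hs ih =>
    intro k
    have hsum : ∀ ω, ∑ i ∈ cons a s ha, W i ω = W a ω + ∑ i ∈ s, W i ω :=
      fun ω => sum_cons ha
    have hmeasS : Measurable (fun ω => ∑ i ∈ s, W i ω) :=
      s.measurable_sum (fun i _ => hm i)
    have hindep : IndepFun (W a) (fun ω => ∑ i ∈ s, W i ω) ℙ := by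
      have h := hind.indepFun_finsetSum_of_notMem hm ha
      have he : (∑ i ∈ s, W i) = fun ω => ∑ i ∈ s, W i ω := by
        funext ω; exact Finset.sum_apply ω s W
      rw [he] at h
      exact h.symm
    have hconv := conv' (W a) (fun ω => ∑ i ∈ s, W i ω) (hm a) hmeasS hindep k
    simp only [hsum]
    rw [hconv]
    have hterm : ∀ j ∈ range (k+1),
        (ℙ {ω | W a ω = j}).toReal * (ℙ {ω | ∑ i ∈ s, W i ω = k - j}).toReal
          = (((-1 : ℝ)^j * Ring.choose (-ν) j)
              * ((-1 : ℝ)^(k-j) * Ring.choose (-((s.card : ℝ) * ν)) (k-j)))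
            * (((1-p) ^ ν * (1-p) ^ ((s.card : ℝ) * ν)) * (p ^ j * p ^ (k-j))) := by
      intro j hj
      rw [hdist a j, ih (k - j)]
      ring
    rw [Finset.sum_congr rfl hterm]
    have hrange : ∑ j ∈ range (k+1),
        (((-1 : ℝ)^j * Ring.choose (-ν) j)
            * ((-1 : ℝ)^(k-j) * Ring.choose (-((s.card : ℝ) * ν)) (k-j)))
          * (((1-p) ^ ν * (1-p) ^ ((s.card : ℝ) * ν)) * (p ^ j * p ^ (k-j)))
        = ∑ ij ∈ antidiagonal k,
        (((-1 : ℝ)^ij.1 * Ring.choose (-ν) ij.1)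
            * ((-1 : ℝ)^ij.2 * Ring.choose (-((s.card : ℝ) * ν)) ij.2))
          * (((1-p) ^ ν * (1-p) ^ ((s.card : ℝ) * ν)) * (p ^ ij.1 * p ^ ij.2)) :=
      (Finset.Nat.sum_antidiagonal_eq_sum_range_succ (fun i j =>
        (((-1 : ℝ)^i * Ring.choose (-ν) i)
            * ((-1 : ℝ)^j * Ring.choose (-((s.card : ℝ) * ν)) j))
          * (((1-p) ^ ν * (1-p) ^ ((s.card : ℝ) * ν)) * (p ^ i * p ^ j))) k).symm
    rw [hrange]
    have hpk : ∀ ij ∈ antidiagonal k,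
        (((-1 : ℝ)^ij.1 * Ring.choose (-ν) ij.1)
            * ((-1 : ℝ)^ij.2 * Ring.choose (-((s.card : ℝ) * ν)) ij.2))
          * (((1-p) ^ ν * (1-p) ^ ((s.card : ℝ) * ν)) * (p ^ ij.1 * p ^ ij.2))
        = (((-1 : ℝ)^ij.1 * Ring.choose (-ν) ij.1)
            * ((-1 : ℝ)^ij.2 * Ring.choose (-((s.card : ℝ) * ν)) ij.2))
          * (((1-p) ^ ν * (1-p) ^ ((s.card : ℝ) * ν)) * p ^ k) := by
      intro ij hij
      have h : ij.1 + ij.2 = k := by simpa using hij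
      rw [← pow_add, h]
    rw [Finset.sum_congr rfl hpk, ← Finset.sum_mul, vander']
    have hcard : ((cons a s ha).card : ℝ) = (s.card : ℝ) + 1 := by
      rw [card_cons]; push_cast; ring
    have hν : ν + (s.card : ℝ) * ν = ((cons a s ha).card : ℝ) * ν := by
      rw [hcard]; ring
    rw [hν, ← Real.rpow_add h1p, hν]
    ring

lemma diff_aux' {Ω : Type*} [MeasureSpace Ω] [IsProbabilityMeasure (ℙ : Measure Ω)]
    (p : ℝ) (hp0 : 0 < p) (hp1 : p < 1)
    (S T : Ω → ℕ) (hmS : Measurable S) (hmT : Measurable T)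
    (h : IndepFun S T ℙ)
    (hS : ∀ k : ℕ, (ℙ {ω | S ω = k}).toReal = (1-p) * p^k)
    (hT : ∀ k : ℕ, (ℙ {ω | T ω = k}).toReal = (1-p) * p^k)
    (a : ℕ) :
    (ℙ {ω | (S ω : ℤ) - T ω = (a : ℤ)}).toReal = ((1-p)/(1+p)) * p^a := by
  have h1p : (0:ℝ) < 1 - p := by linarith
  have hset : {ω | (S ω : ℤ) - T ω = (a : ℤ)}
      = ⋃ m : ℕ, (T ⁻¹' {m} ∩ S ⁻¹' {m + a}) := by
    ext ω
    simp only [Set.mem_setOf_eq, Set.mem_iUnion, Set.mem_inter_iff, Set.mem_preimage,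
      Set.mem_singleton_iff]
    constructor
    · intro hω
      exact ⟨T ω, rfl, by omega⟩
    · rintro ⟨m, h1, h2⟩
      omega
  have hmeas : ∀ m : ℕ, MeasurableSet (T ⁻¹' {m} ∩ S ⁻¹' ({m + a} : Set ℕ)) :=
    fun m => (hmT (measurableSet_singleton m)).inter (hmS (measurableSet_singleton _))
  have hdisj : Pairwise (Function.onFun Disjoint
      (fun m : ℕ => T ⁻¹' {m} ∩ S ⁻¹' ({m + a} : Set ℕ))) := by
    intro i j hij
    refine Set.disjoint_left.mpr fun ω hωi hωj => hij ?_
    rw [← hωi.1, ← hωj.1]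
  rw [hset, measure_iUnion hdisj hmeas, ENNReal.tsum_toReal_eq (fun m => measure_ne_top _ _)]
  have hterm : ∀ m : ℕ, (ℙ (T ⁻¹' {m} ∩ S ⁻¹' ({m + a} : Set ℕ))).toReal
      = ((1-p) * (1-p) * p^a) * (p*p)^m := by
    intro m
    rw [h.symm.measure_inter_preimage_eq_mul _ _ (measurableSet_singleton m)
      (measurableSet_singleton _), ENNReal.toReal_mul]
    have e1 : (ℙ (T ⁻¹' {m})).toReal = (1-p) * p^m := hT m
    have e2 : (ℙ (S ⁻¹' ({m + a} : Set ℕ))).toReal = (1-p) * p^(m+a) := hS (m+a)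
    rw [e1, e2, pow_add, mul_pow]
    ring
  rw [tsum_congr hterm, tsum_mul_left,
    tsum_geometric_of_lt_one (by positivity) (by nlinarith)]
  have hne : 1 - p * p ≠ 0 := by nlinarith
  have hne2 : 1 + p ≠ 0 := by linarith
  field_simp
  have hne3 : 1 - p ^ 2 ≠ 0 := by nlinarith
  field_simp
  ring

lemma diff_geom' {Ω : Type*} [MeasureSpace Ω] [IsProbabilityMeasure (ℙ : Measure Ω)]
    (p : ℝ) (hp0 : 0 < p) (hp1 : p < 1)
    (S T : Ω → ℕ) (hmS : Measurable S) (hmT : Measurable T)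
    (h : IndepFun S T ℙ)
    (hS : ∀ k : ℕ, (ℙ {ω | S ω = k}).toReal = (1-p) * p^k)
    (hT : ∀ k : ℕ, (ℙ {ω | T ω = k}).toReal = (1-p) * p^k)
    (k : ℤ) :
    (ℙ {ω | (S ω : ℤ) - T ω = k}).toReal = ((1-p)/(1+p)) * p^k.natAbs := by
  rcases le_or_gt 0 k with hk | hk
  · have h' : k = (k.natAbs : ℤ) := (Int.natAbs_of_nonneg hk).symm
    rw [h']
    exact diff_aux' p hp0 hp1 S T hmS hmT h hS hT k.natAbs
  · have hset : {ω | (S ω : ℤ) - T ω = k} = {ω | (T ω : ℤ) - S ω = (k.natAbs : ℤ)} := by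
      ext ω
      simp only [Set.mem_setOf_eq]
      omega
    rw [hset]
    exact diff_aux' p hp0 hp1 T S hmT hmS h.symm hT hS k.natAbs

end Aux

/-- If `X₁,…,Xₙ, Y₁,…,Yₙ` are independent `Polya(1/n, p)` (negative binomial) random
variables, i.e. `P[Xᵢ = k] = Γ(k + 1/n)/(k!·Γ(1/n)) · (1-p)^(1/n) · p^k`, then
`Z = ∑ᵢ (Xᵢ - Yᵢ)` follows the discrete Laplace distribution
`P[Z = k] = ((1-p)/(1+p)) · p^|k|`. -/
theorem stmt_17 {Ω : Type*} [MeasureSpace Ω] [IsProbabilityMeasure (ℙ : Measure Ω)]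
    (n : ℕ) (hn : 1 ≤ n) (p : ℝ) (hp0 : 0 < p) (hp1 : p < 1)
    (X Y : Fin n → Ω → ℕ)
    (hmeasX : ∀ i, Measurable (X i)) (hmeasY : ∀ i, Measurable (Y i))
    (hindep : iIndepFun
      (fun j : Fin n ⊕ Fin n => Sum.elim X Y j) ℙ)
    (hdist : ∀ (j : Fin n ⊕ Fin n) (k : ℕ),
      (ℙ {ω | Sum.elim X Y j ω = k}).toReal =
        (Real.Gamma (k + 1 / n) / (k.factorial * Real.Gamma (1 / n))) *
          (1 - p) ^ ((1 : ℝ) / n) * p ^ k)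
    (Z : Ω → ℤ)
    (hZ : Z = fun ω => ∑ i, ((X i ω : ℤ) - (Y i ω : ℤ))) :
    ∀ k : ℤ, (ℙ {ω | Z ω = k}).toReal = ((1 - p) / (1 + p)) * p ^ k.natAbs := by
  classical
  have hn0 : (0:ℝ) < (n:ℝ) := by exact_mod_cast Nat.pos_of_ne_zero (by omega)
  have hν0 : (0:ℝ) < 1 / (n:ℝ) := by positivity
  set W : Fin n ⊕ Fin n → Ω → ℕ := fun j => Sum.elim X Y j with hW
  have hmW : ∀ j, Measurable (W j) := by
    rintro (i | i)
    · exact hmeasX i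
    · exact hmeasY i
  have hdist' : ∀ j k, (ℙ {ω | W j ω = k}).toReal
      = (-1 : ℝ)^k * Ring.choose (-(1/(n:ℝ))) k * (1-p) ^ ((1:ℝ)/(n:ℝ)) * p ^ k := by
    intro j k
    rw [hdist j k, g_eq' _ hν0 k]
  -- the two index sets
  set tX : Finset (Fin n ⊕ Fin n) := Finset.univ.map ⟨Sum.inl, Sum.inl_injective⟩ with htX
  set tY : Finset (Fin n ⊕ Fin n) := Finset.univ.map ⟨Sum.inr, Sum.inr_injective⟩ with htY
  haveI : Nonempty (Fin n) := ⟨⟨0, by omega⟩⟩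
  have htXne : tX.Nonempty := Finset.univ_nonempty.map
  have htYne : tY.Nonempty := Finset.univ_nonempty.map
  have hcardX : (tX.card : ℝ) = (n : ℝ) := by
    rw [htX, Finset.card_map, Finset.card_univ, Fintype.card_fin]
  have hcardY : (tY.card : ℝ) = (n : ℝ) := by
    rw [htY, Finset.card_map, Finset.card_univ, Fintype.card_fin]
  have hone : ∀ c : ℝ, c = (n:ℝ) → c * (1/(n:ℝ)) = 1 := by
    intro c hc; rw [hc]; field_simp
  have hg1 : ∀ k : ℕ, (-1 : ℝ)^k * Ring.choose (-(1:ℝ)) k = 1 := by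
    intro k
    rw [← g_eq' 1 one_pos k, Real.Gamma_one, Real.Gamma_nat_eq_factorial]
    field_simp
  -- sums
  set S : Ω → ℕ := fun ω => ∑ i, X i ω with hSdef
  set T : Ω → ℕ := fun ω => ∑ i, Y i ω with hTdef
  have hXsum : ∀ ω, ∑ j ∈ tX, W j ω = S ω := by
    intro ω; rw [htX, Finset.sum_map]; rfl
  have hYsum : ∀ ω, ∑ j ∈ tY, W j ω = T ω := by
    intro ω; rw [htY, Finset.sum_map]; rfl
  have hS : ∀ k : ℕ, (ℙ {ω | S ω = k}).toReal = (1-p) * p^k := by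
    intro k
    have h := sum_polya' W hmW hindep (1/(n:ℝ)) p hp1 hdist' tX htXne k
    simp only [hXsum] at h
    rw [h, hone _ hcardX, hg1, Real.rpow_one, one_mul]
  have hT : ∀ k : ℕ, (ℙ {ω | T ω = k}).toReal = (1-p) * p^k := by
    intro k
    have h := sum_polya' W hmW hindep (1/(n:ℝ)) p hp1 hdist' tY htYne k
    simp only [hYsum] at h
    rw [h, hone _ hcardY, hg1, Real.rpow_one, one_mul]
  have hmS : Measurable S := Finset.measurable_sum Finset.univ (fun i _ => hmeasX i)
  have hmT : Measurable T := Finset.measurable_sum Finset.univ (fun i _ => hmeasY i)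
  -- independence of S and T
  have hdisjXY : Disjoint tX tY := by
    rw [Finset.disjoint_left]
    intro x hx hy
    rw [htX, Finset.mem_map] at hx
    rw [htY, Finset.mem_map] at hy
    obtain ⟨a, _, ha⟩ := hx
    obtain ⟨b, _, hb⟩ := hy
    rw [← ha] at hb
    exact Sum.inr_ne_inl hb
  have hST : IndepFun S T ℙ := by
    have hfin := hindep.indepFun_finset tX tY hdisjXY hmW
    have hgX : Measurable (fun v : ((i : tX) → ℕ) => ∑ i, v i) :=
      Finset.measurable_sum Finset.univ (fun i _ => measurable_pi_apply i)
    have hgY : Measurable (fun v : ((i : tY) → ℕ) => ∑ i, v i) :=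
      Finset.measurable_sum Finset.univ (fun i _ => measurable_pi_apply i)
    have h := hfin.comp hgX hgY
    have heX : ((fun v : ((i : tX) → ℕ) => ∑ i, v i) ∘ (fun a (i : tX) => W i a)) = S := by
      funext a
      simp only [Function.comp_apply]
      rw [Finset.sum_coe_sort tX (fun j => W j a), hXsum]
    have heY : ((fun v : ((i : tY) → ℕ) => ∑ i, v i) ∘ (fun a (i : tY) => W i a)) = T := by
      funext a
      simp only [Function.comp_apply]
      rw [Finset.sum_coe_sort tY (fun j => W j a), hYsum]
    rwa [heX, heY] at h
  -- conclude
  intro k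
  have hZset : {ω | Z ω = k} = {ω | (S ω : ℤ) - T ω = k} := by
    ext ω
    rw [hZ]
    simp only [Set.mem_setOf_eq, hSdef, hTdef]
    rw [Finset.sum_sub_distrib]
    push_cast
    rfl
  rw [hZset]
  exact diff_geom' p hp0 hp1 S T hmS hmT hST hS hT k
end

section
/- Let X and Y be independent random variables uniformly distributed on (-1,1), conditioned on the event 0 < U ≤ 1 where U = X² + Y². Then Z₁ = X·√(-2 ln U / U) and Z₂ = Y·√(-2 ln U / U) are independent standard Gaussian random variables. -/
open MeasureTheory ProbabilityTheory

open Set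

noncomputable section BM

/-- squared radius -/
def bmU (p : ℝ × ℝ) : ℝ := p.1 ^ 2 + p.2 ^ 2

/-- the radial factor as a function of u -/
def bmPhi (t : ℝ) : ℝ := Real.sqrt (-2 * Real.log t / t)

/-- derivative of bmPhi -/
def bmPhi' (t : ℝ) : ℝ := ((-2 + 2 * Real.log t) / t ^ 2) / (2 * Real.sqrt (-2 * Real.log t / t))

/-- the Marsaglia transform -/
def bmT (q : ℝ × ℝ) : ℝ × ℝ :=
  (q.1 * Real.sqrt (-2 * Real.log (q.1 ^ 2 + q.2 ^ 2) / (q.1 ^ 2 + q.2 ^ 2)),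
   q.2 * Real.sqrt (-2 * Real.log (q.1 ^ 2 + q.2 ^ 2) / (q.1 ^ 2 + q.2 ^ 2)))

/-- punctured open disk -/
def bmD : Set (ℝ × ℝ) := {p | 0 < bmU p ∧ bmU p < 1}

lemma bmT_eq_smul (p : ℝ × ℝ) : bmT p = bmPhi (bmU p) • p := by
  simp [bmT, bmPhi, bmU, Prod.ext_iff, smul_eq_mul, mul_comm]

lemma bmU_pos_lt_one {p : ℝ × ℝ} (hp : p ∈ bmD) : 0 < bmU p ∧ bmU p < 1 := hp

lemma bm_h_pos {p : ℝ × ℝ} (hp : p ∈ bmD) : 0 < -2 * Real.log (bmU p) / (bmU p) := by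
  obtain ⟨h0, h1⟩ := hp
  have : Real.log (bmU p) < 0 := Real.log_neg h0 h1
  exact div_pos (by nlinarith) h0

lemma bmPhi_pos {p : ℝ × ℝ} (hp : p ∈ bmD) : 0 < bmPhi (bmU p) :=
  Real.sqrt_pos.2 (bm_h_pos hp)

lemma bmPhi_sq {p : ℝ × ℝ} (hp : p ∈ bmD) :
    bmPhi (bmU p) ^ 2 = -2 * Real.log (bmU p) / (bmU p) :=
  Real.sq_sqrt (bm_h_pos hp).le

lemma bmU_bmT {p : ℝ × ℝ} (hp : p ∈ bmD) : bmU (bmT p) = -2 * Real.log (bmU p) := by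
  have h0 := (bmU_pos_lt_one hp).1
  have : bmU (bmT p) = bmPhi (bmU p) ^ 2 * bmU p := by
    simp [bmT, bmU, bmPhi]; ring
  rw [this, bmPhi_sq hp]
  field_simp

/-- Derivative of the map -/
def bmT' (p : ℝ × ℝ) : ℝ × ℝ →L[ℝ] ℝ × ℝ :=
  bmPhi (bmU p) • ContinuousLinearMap.id ℝ (ℝ × ℝ) +
    (bmPhi' (bmU p) • ((2 * p.1) • ContinuousLinearMap.fst ℝ ℝ ℝ +
      (2 * p.2) • ContinuousLinearMap.snd ℝ ℝ ℝ)).smulRight p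

lemma bmU_hasFDerivAt (p : ℝ × ℝ) :
    HasFDerivAt bmU ((2 * p.1) • ContinuousLinearMap.fst ℝ ℝ ℝ +
      (2 * p.2) • ContinuousLinearMap.snd ℝ ℝ ℝ) p := by
  have h1 : HasFDerivAt (fun q : ℝ × ℝ => q.1 ^ 2)
      ((2 * p.1) • ContinuousLinearMap.fst ℝ ℝ ℝ) p := by
    have := (hasFDerivAt_fst (𝕜 := ℝ) (p := p) (E := ℝ) (F := ℝ)).mul
      (hasFDerivAt_fst (𝕜 := ℝ) (p := p) (E := ℝ) (F := ℝ))
    refine (this.congr_fderiv ?_).congr_of_eventuallyEq (Filter.Eventually.of_forall fun q => ?_)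
    · ext v <;> simp [two_mul] <;> ring
    · simp [sq]
  have h2 : HasFDerivAt (fun q : ℝ × ℝ => q.2 ^ 2)
      ((2 * p.2) • ContinuousLinearMap.snd ℝ ℝ ℝ) p := by
    have := (hasFDerivAt_snd (𝕜 := ℝ) (p := p) (E := ℝ) (F := ℝ)).mul
      (hasFDerivAt_snd (𝕜 := ℝ) (p := p) (E := ℝ) (F := ℝ))
    refine (this.congr_fderiv ?_).congr_of_eventuallyEq (Filter.Eventually.of_forall fun q => ?_)
    · ext v <;> simp [two_mul] <;> ring
    · simp [sq]
  exact h1.add h2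

lemma bmPhi_hasDerivAt {t : ℝ} (h0 : 0 < t) (h1 : t < 1) :
    HasDerivAt bmPhi (bmPhi' t) t := by
  have hlog : Real.log t < 0 := Real.log_neg h0 h1
  have hh : HasDerivAt (fun s => -2 * Real.log s / s) ((-2 + 2 * Real.log t) / t ^ 2) t := by
    have hn : HasDerivAt (fun s : ℝ => -2 * Real.log s) (-2 / t) t := by
      simpa [div_eq_mul_inv, mul_comm] using (Real.hasDerivAt_log h0.ne').const_mul (-2 : ℝ)
    have := hn.div (hasDerivAt_id t) h0.ne'
    refine (this.congr_deriv ?_).congr_of_eventuallyEq (Filter.Eventually.of_forall fun s => rfl)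
    simp only [id]
    field_simp
    ring
  have hpos : 0 < -2 * Real.log t / t := div_pos (by nlinarith) h0
  exact hh.sqrt hpos.ne'

lemma bmT_hasFDerivAt {p : ℝ × ℝ} (hp : p ∈ bmD) : HasFDerivAt bmT (bmT' p) p := by
  have hc : HasFDerivAt (fun q => bmPhi (bmU q))
      (bmPhi' (bmU p) • ((2 * p.1) • ContinuousLinearMap.fst ℝ ℝ ℝ +
        (2 * p.2) • ContinuousLinearMap.snd ℝ ℝ ℝ)) p :=
    (bmPhi_hasDerivAt hp.1 hp.2).comp_hasFDerivAt p (bmU_hasFDerivAt p)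
  have hf : HasFDerivAt (fun q : ℝ × ℝ => q) (ContinuousLinearMap.id ℝ (ℝ × ℝ)) p :=
    hasFDerivAt_id p
  have := hc.smul hf
  have heq : (fun q : ℝ × ℝ => bmPhi (bmU q) • q) = bmT := by
    ext q <;> simp [bmT, bmU, bmPhi, smul_eq_mul, mul_comm]
  rw [← heq]
  exact this

end BM

section Part2

lemma clm_det_fin_two (f : ℝ × ℝ →L[ℝ] ℝ × ℝ) :
    f.det = (f (1, 0)).1 * (f (0, 1)).2 - (f (0, 1)).1 * (f (1, 0)).2 := by
  change (f : ℝ × ℝ →ₗ[ℝ] ℝ × ℝ).det = _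
  rw [← LinearMap.det_toMatrix (Module.Basis.finTwoProd ℝ), Matrix.det_fin_two]
  simp [LinearMap.toMatrix_apply, Module.Basis.finTwoProd]

lemma bmT'_det {p : ℝ × ℝ} (hp : p ∈ bmD) : (bmT' p).det = -2 / bmU p := by
  have hu0 := hp.1
  have hφ : (0:ℝ) < bmPhi (bmU p) := bmPhi_pos hp
  have hsq : bmPhi (bmU p) ^ 2 * bmU p = -2 * Real.log (bmU p) := by
    rw [bmPhi_sq hp]; field_simp
  have hφd : 2 * (bmPhi (bmU p) * bmPhi' (bmU p)) * bmU p ^ 2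
      = -2 + 2 * Real.log (bmU p) := by
    have hd : bmPhi' (bmU p) = ((-2 + 2 * Real.log (bmU p)) / (bmU p) ^ 2)
        / (2 * bmPhi (bmU p)) := rfl
    rw [hd]
    field_simp
  rw [clm_det_fin_two]
  have e1 : bmT' p (1, 0) = (bmPhi (bmU p) + bmPhi' (bmU p) * (2 * p.1) * p.1,
      bmPhi' (bmU p) * (2 * p.1) * p.2) := by
    simp [bmT', Prod.ext_iff, smul_eq_mul] <;> ring
  have e2 : bmT' p (0, 1) = (bmPhi' (bmU p) * (2 * p.2) * p.1,
      bmPhi (bmU p) + bmPhi' (bmU p) * (2 * p.2) * p.2) := by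
    simp [bmT', Prod.ext_iff, smul_eq_mul] <;> ring
  rw [e1, e2, eq_div_iff hu0.ne']
  have hU : bmU p = p.1 ^ 2 + p.2 ^ 2 := rfl
  linear_combination hsq + hφd - (2 * bmPhi (bmU p) * bmPhi' (bmU p) * bmU p) * hU

lemma bmT_injOn : Set.InjOn bmT bmD := by
  intro p hp q hq h
  have h1 : bmU (bmT p) = bmU (bmT q) := by rw [h]
  rw [bmU_bmT hp, bmU_bmT hq] at h1
  have hlog : Real.log (bmU p) = Real.log (bmU q) := by linarith
  have huv : bmU p = bmU q := by
    rw [← Real.exp_log hp.1, ← Real.exp_log hq.1, hlog]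
  have h2 : bmPhi (bmU p) • p = bmPhi (bmU p) • q := by
    rw [← bmT_eq_smul, h, bmT_eq_smul, huv]
  exact smul_right_injective (ℝ × ℝ) (bmPhi_pos hp).ne' h2

lemma bmT_image : bmT '' bmD = {((0 : ℝ), (0 : ℝ))}ᶜ := by
  ext y
  simp only [Set.mem_image, Set.mem_compl_iff, Set.mem_singleton_iff]
  constructor
  · rintro ⟨p, hp, rfl⟩ h0
    have h2 := bmU_bmT hp
    rw [h0] at h2
    have hU0 : bmU ((0 : ℝ), (0 : ℝ)) = 0 := by simp [bmU]
    rw [hU0] at h2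
    have : Real.log (bmU p) < 0 := Real.log_neg hp.1 hp.2
    linarith
  · intro hy
    set S := bmU y with hS
    have hS0 : 0 < S := by
      rcases lt_or_eq_of_le (by positivity : (0:ℝ) ≤ y.1 ^ 2 + y.2 ^ 2) with h | h
      · exact h
      · exfalso; apply hy
        have hy1 : y.1 = 0 := by nlinarith [sq_nonneg y.1, sq_nonneg y.2]
        have hy2 : y.2 = 0 := by nlinarith [sq_nonneg y.1, sq_nonneg y.2]
        exact Prod.ext hy1 hy2
    set E := Real.exp (-S / 2) with hE
    have hE0 : 0 < E := Real.exp_pos _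
    have hE1 : E < 1 := by
      rw [hE]
      exact Real.exp_lt_one_iff.2 (by linarith)
    set c := Real.sqrt (E / S) with hc
    have hcsq : c ^ 2 = E / S := Real.sq_sqrt (le_of_lt (div_pos hE0 hS0))
    have hup : bmU (c • y) = E := by
      have h1 : bmU (c • y) = c ^ 2 * bmU y := by
        simp only [bmU, Prod.smul_fst, Prod.smul_snd, smul_eq_mul]; ring
      rw [h1, hcsq, ← hS]
      field_simp
    refine ⟨c • y, ?_, ?_⟩
    · show 0 < bmU (c • y) ∧ bmU (c • y) < 1
      rw [hup]; exact ⟨hE0, hE1⟩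
    · rw [bmT_eq_smul, hup, smul_smul]
      have hφE : bmPhi E = Real.sqrt (S / E) := by
        show Real.sqrt (-2 * Real.log E / E) = _
        rw [hE, Real.log_exp]
        congr 1
        ring
      rw [hφE, hc, ← Real.sqrt_mul (by positivity)]
      have h9 : S / E * (E / S) = 1 := by field_simp
      rw [h9, Real.sqrt_one, one_smul]

end Part2

section Part3
open Real

/-- joint gaussian density -/
noncomputable def bmRho (p : ℝ × ℝ) : ENNReal :=
  ProbabilityTheory.gaussianPDF 0 1 p.1 * ProbabilityTheory.gaussianPDF 0 1 p.2

lemma bmU_measurable : Measurable bmU := by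
  unfold bmU; exact (measurable_fst.pow_const 2).add (measurable_snd.pow_const 2)

lemma bmT_measurable : Measurable bmT := by
  have m1 : Measurable fun q : ℝ × ℝ => Real.sqrt (-2 * Real.log (bmU q) / bmU q) :=
    Real.continuous_sqrt.measurable.comp
      (((Real.measurable_log.comp bmU_measurable).const_mul (-2)).div bmU_measurable)
  exact (measurable_fst.mul m1).prodMk (measurable_snd.mul m1)

lemma bmD_measurable : MeasurableSet bmD := by
  have : bmD = bmU ⁻¹' (Set.Ioo 0 1) := rfl
  rw [this]
  exact bmU_measurable measurableSet_Ioo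

lemma bmRho_measurable : Measurable bmRho :=
  ((ProbabilityTheory.measurable_gaussianPDF 0 1).comp measurable_fst).mul
    ((ProbabilityTheory.measurable_gaussianPDF 0 1).comp measurable_snd)

lemma bm_gauss_prod :
    (ProbabilityTheory.gaussianReal 0 1).prod (ProbabilityTheory.gaussianReal 0 1)
      = (volume : Measure (ℝ × ℝ)).withDensity bmRho := by
  refine (Measure.prod_eq (μν := (volume : Measure (ℝ × ℝ)).withDensity bmRho)
    (μ := ProbabilityTheory.gaussianReal 0 1)
    (ν := ProbabilityTheory.gaussianReal 0 1) fun s t hs ht => ?_)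
  rw [withDensity_apply _ (hs.prod ht), Measure.volume_eq_prod, ← Measure.prod_restrict]
  rw [show (fun p : ℝ × ℝ => bmRho p)
      = fun p : ℝ × ℝ => ProbabilityTheory.gaussianPDF 0 1 p.1
          * ProbabilityTheory.gaussianPDF 0 1 p.2 from rfl]
  rw [MeasureTheory.lintegral_prod_mul
    (ProbabilityTheory.measurable_gaussianPDF 0 1).aemeasurable
    (ProbabilityTheory.measurable_gaussianPDF 0 1).aemeasurable,
    ProbabilityTheory.gaussianReal_apply _ one_ne_zero s,
    ProbabilityTheory.gaussianReal_apply _ one_ne_zero t]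

lemma bm_gpdf_eq (x : ℝ) : ProbabilityTheory.gaussianPDFReal 0 1 x
    = (Real.sqrt (2 * π))⁻¹ * Real.exp (-x ^ 2 / 2) := by
  unfold ProbabilityTheory.gaussianPDFReal
  norm_num

lemma bm_density_eq {p : ℝ × ℝ} (hp : p ∈ bmD) :
    ENNReal.ofReal |(bmT' p).det| * bmRho (bmT p) = ENNReal.ofReal π⁻¹ := by
  have hu0 := hp.1
  have hdet : |(bmT' p).det| = 2 / bmU p := by
    rw [bmT'_det hp, abs_div, abs_neg]
    norm_num [abs_of_pos hu0]
  have hsum : (bmT p).1 ^ 2 + (bmT p).2 ^ 2 = -2 * Real.log (bmU p) := bmU_bmT hp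
  have hrho : bmRho (bmT p) = ENNReal.ofReal ((2 * π)⁻¹ * bmU p) := by
    unfold bmRho ProbabilityTheory.gaussianPDF
    rw [← ENNReal.ofReal_mul (ProbabilityTheory.gaussianPDFReal_nonneg 0 1 _)]
    congr 1
    rw [bm_gpdf_eq, bm_gpdf_eq]
    have hss : (Real.sqrt (2*π))⁻¹ * (Real.sqrt (2*π))⁻¹ = (2*π)⁻¹ := by
      rw [← mul_inv, Real.mul_self_sqrt (by positivity)]
    have hexp : Real.exp (-(bmT p).1 ^ 2 / 2) * Real.exp (-(bmT p).2 ^ 2 / 2) = bmU p := by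
      rw [← Real.exp_add, show -(bmT p).1 ^ 2 / 2 + -(bmT p).2 ^ 2 / 2
          = -((bmT p).1 ^ 2 + (bmT p).2 ^ 2) / 2 by ring, hsum,
        show -(-2 * Real.log (bmU p)) / 2 = Real.log (bmU p) by ring, Real.exp_log hu0]
    calc (Real.sqrt (2*π))⁻¹ * Real.exp (-(bmT p).1 ^ 2 / 2)
          * ((Real.sqrt (2*π))⁻¹ * Real.exp (-(bmT p).2 ^ 2 / 2))
        = ((Real.sqrt (2*π))⁻¹ * (Real.sqrt (2*π))⁻¹)
          * (Real.exp (-(bmT p).1 ^ 2 / 2) * Real.exp (-(bmT p).2 ^ 2 / 2)) := by ring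
      _ = (2*π)⁻¹ * bmU p := by rw [hss, hexp]
  rw [hdet, hrho, ← ENNReal.ofReal_mul (by positivity)]
  congr 1
  field_simp

lemma bm_key {A : Set (ℝ × ℝ)} (hA : MeasurableSet A) :
    ∫⁻ p in A, bmRho p = ENNReal.ofReal π⁻¹ * volume (bmD ∩ bmT ⁻¹' A) := by
  have hzero : (volume : Measure (ℝ × ℝ)) {((0:ℝ), (0:ℝ))} = 0 := measure_singleton _
  set B : Set (ℝ × ℝ) := A ∩ ({((0:ℝ), (0:ℝ))}ᶜ : Set (ℝ × ℝ)) with hB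
  have hAe : A =ᵐ[(volume : Measure (ℝ × ℝ))] B := by
    refine (MeasureTheory.ae_eq_set.2 ⟨?_, ?_⟩)
    · refine measure_mono_null (fun x hx => ?_) hzero
      rcases hx with ⟨hx1, hx2⟩
      rw [hB] at hx2
      simp only [Set.mem_inter_iff, Set.mem_compl_iff, not_and, not_not] at hx2
      exact hx2 hx1
    · rw [hB, Set.diff_eq_empty.2 Set.inter_subset_left, measure_empty]
  rw [setLIntegral_congr hAe]
  have himg : B = bmT '' (bmD ∩ bmT ⁻¹' A) := by
    rw [Set.image_inter_preimage, bmT_image, hB, Set.inter_comm]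
  rw [himg]
  have hs : MeasurableSet (bmD ∩ bmT ⁻¹' A) := bmD_measurable.inter (bmT_measurable hA)
  rw [lintegral_image_eq_lintegral_abs_det_fderiv_mul (volume : Measure (ℝ × ℝ)) hs
    (fun x hx => (bmT_hasFDerivAt hx.1).hasFDerivWithinAt)
    (bmT_injOn.mono Set.inter_subset_left) bmRho]
  rw [setLIntegral_congr_fun hs
    (fun x hx => bm_density_eq hx.1)]
  rw [setLIntegral_const]

lemma bm_vol_D : (volume : Measure (ℝ × ℝ)) bmD = ENNReal.ofReal π := by
  have h := bm_key MeasurableSet.univ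
  rw [Set.preimage_univ, Set.inter_univ, Measure.restrict_univ] at h
  have hone : ∫⁻ p, bmRho p ∂(volume : Measure (ℝ × ℝ)) = 1 := by
    rw [← setLIntegral_univ, ← withDensity_apply' bmRho Set.univ, ← bm_gauss_prod]
    exact measure_univ
  rw [hone, ENNReal.ofReal_inv_of_pos Real.pi_pos] at h
  have h2 := ENNReal.eq_inv_of_mul_eq_one_left h.symm
  have h3 := congrArg Inv.inv h2
  simpa using h3.symm

section Part4
open Real

lemma bm_circle_null :
    (volume : Measure (ℝ × ℝ)) {p : ℝ × ℝ | p.1 ^ 2 + p.2 ^ 2 = 1} = 0 := by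
  have hC : MeasurableSet {p : ℝ × ℝ | p.1 ^ 2 + p.2 ^ 2 = 1} := by
    have hcont : Continuous fun p : ℝ × ℝ => p.1 ^ 2 + p.2 ^ 2 := by continuity
    exact hcont.measurable (measurableSet_singleton (1 : ℝ))
  rw [Measure.volume_eq_prod, Measure.prod_apply hC]
  have hslice : ∀ x : ℝ,
      (volume : Measure ℝ) (Prod.mk x ⁻¹' {p : ℝ × ℝ | p.1 ^ 2 + p.2 ^ 2 = 1}) = 0 := by
    intro x
    have hsub : Prod.mk x ⁻¹' {p : ℝ × ℝ | p.1 ^ 2 + p.2 ^ 2 = 1}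
        ⊆ {Real.sqrt (1 - x ^ 2), -Real.sqrt (1 - x ^ 2)} := by
      intro y hy
      have hy' : x ^ 2 + y ^ 2 = 1 := hy
      have h1 : y ^ 2 = 1 - x ^ 2 := by linarith
      have h2 : |y| = Real.sqrt (1 - x ^ 2) := by
        rw [← h1, Real.sqrt_sq_eq_abs]
      rcases (abs_eq (Real.sqrt_nonneg _)).1 h2 with h | h
      · simp [h]
      · simp [h]
    exact measure_mono_null hsub ((Set.toFinite _).measure_zero _)
  have hslice' : ∀ x : ℝ, (volume : Measure ℝ) {a : ℝ | x ^ 2 + a ^ 2 = 1} = 0 :=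
    fun x => hslice x
  simp [hslice']

lemma bm_vol_core {X Y : Set (ℝ × ℝ)} (h1 : Y ⊆ X)
    (h2 : X \ Y ⊆ {p : ℝ × ℝ | p.1 ^ 2 + p.2 ^ 2 = 1}) :
    (volume : Measure (ℝ × ℝ)) X = volume Y := by
  refine le_antisymm ?_ (measure_mono h1)
  calc (volume : Measure (ℝ × ℝ)) X ≤ volume (Y ∪ (X \ Y)) := by
        refine measure_mono fun x hx => ?_
        by_cases h : x ∈ Y
        · exact Or.inl h
        · exact Or.inr ⟨hx, h⟩
    _ ≤ volume Y + volume (X \ Y) := measure_union_le _ _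
    _ ≤ volume Y + volume {p : ℝ × ℝ | p.1 ^ 2 + p.2 ^ 2 = 1} :=
        add_le_add le_rfl (measure_mono h2)
    _ = volume Y := by rw [bm_circle_null, add_zero]

lemma bmD_subset_sq : bmD ⊆ Set.Ioo (-1 : ℝ) 1 ×ˢ Set.Ioo (-1 : ℝ) 1 := by
  rintro p ⟨h0, h1⟩
  have hx : p.1 ^ 2 < 1 := by
    have := sq_nonneg p.2
    simp only [bmU] at h1
    nlinarith
  have hy : p.2 ^ 2 < 1 := by
    have := sq_nonneg p.1
    simp only [bmU] at h1
    nlinarith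
  constructor
  · constructor <;> nlinarith
  · constructor <;> nlinarith

lemma bm_vol_congr (t : Set (ℝ × ℝ)) :
    (volume : Measure (ℝ × ℝ))
        (({q : ℝ × ℝ | 0 < q.1 ^ 2 + q.2 ^ 2 ∧ q.1 ^ 2 + q.2 ^ 2 ≤ 1} ∩ t)
          ∩ Set.Ioo (-1 : ℝ) 1 ×ˢ Set.Ioo (-1 : ℝ) 1)
      = volume (bmD ∩ t) := by
  refine bm_vol_core ?_ ?_
  · rintro x ⟨hxD, hxt⟩
    exact ⟨⟨⟨hxD.1, hxD.2.le⟩, hxt⟩, bmD_subset_sq hxD⟩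
  · rintro x ⟨⟨⟨hs, ht⟩, _⟩, hnot⟩
    obtain ⟨h0, h1⟩ := hs
    simp only [Set.mem_inter_iff, not_and] at hnot
    by_contra hne
    simp only [Set.mem_setOf_eq] at hne
    have hlt : bmU x < 1 := lt_of_le_of_ne h1 hne
    exact hnot ⟨h0, hlt⟩ ht

end Part4

/-- Polar (Marsaglia) Box–Muller: if `(X, Y)` is uniform on the square `(-1,1)²`,
conditioned on `0 < U ≤ 1` where `U = X² + Y²`, then
`(X·√(-2 ln U / U), Y·√(-2 ln U / U))` is a pair of independent standard Gaussians,
i.e. its joint law is the product of two standard Gaussian measures. -/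
theorem stmt_18 :
    Measure.map
      (fun q : ℝ × ℝ =>
        (q.1 * Real.sqrt (-2 * Real.log (q.1 ^ 2 + q.2 ^ 2) / (q.1 ^ 2 + q.2 ^ 2)),
         q.2 * Real.sqrt (-2 * Real.log (q.1 ^ 2 + q.2 ^ 2) / (q.1 ^ 2 + q.2 ^ 2))))
      (ProbabilityTheory.cond
        ((4 : ENNReal)⁻¹ • volume.restrict (Set.Ioo (-1 : ℝ) 1 ×ˢ Set.Ioo (-1 : ℝ) 1))
        {q : ℝ × ℝ | 0 < q.1 ^ 2 + q.2 ^ 2 ∧ q.1 ^ 2 + q.2 ^ 2 ≤ 1})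
    = (gaussianReal 0 1).prod (gaussianReal 0 1) := by
  have hsm : MeasurableSet {q : ℝ × ℝ | 0 < q.1 ^ 2 + q.2 ^ 2 ∧ q.1 ^ 2 + q.2 ^ 2 ≤ 1} := by
    have he : {q : ℝ × ℝ | 0 < q.1 ^ 2 + q.2 ^ 2 ∧ q.1 ^ 2 + q.2 ^ 2 ≤ 1}
        = bmU ⁻¹' (Set.Ioc 0 1) := rfl
    rw [he]
    exact bmU_measurable measurableSet_Ioc
  have hmap : Measure.map
      (fun q : ℝ × ℝ =>
        (q.1 * Real.sqrt (-2 * Real.log (q.1 ^ 2 + q.2 ^ 2) / (q.1 ^ 2 + q.2 ^ 2)),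
         q.2 * Real.sqrt (-2 * Real.log (q.1 ^ 2 + q.2 ^ 2) / (q.1 ^ 2 + q.2 ^ 2))))
      = Measure.map bmT := rfl
  rw [hmap]
  refine Measure.ext fun A hA => ?_
  rw [Measure.map_apply bmT_measurable hA, ProbabilityTheory.cond_apply hsm,
    bm_gauss_prod, withDensity_apply _ hA, bm_key hA]
  have hresapp : ∀ X : Set (ℝ × ℝ), MeasurableSet X →
      ((4 : ENNReal)⁻¹ • volume.restrict (Set.Ioo (-1 : ℝ) 1 ×ˢ Set.Ioo (-1 : ℝ) 1)) X
        = 4⁻¹ * volume (X ∩ Set.Ioo (-1 : ℝ) 1 ×ˢ Set.Ioo (-1 : ℝ) 1) := by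
    intro X hX
    rw [Measure.smul_apply, smul_eq_mul, Measure.restrict_apply hX]
  rw [hresapp _ hsm, hresapp _ (hsm.inter (bmT_measurable hA))]
  have h1 : volume (({q : ℝ × ℝ | 0 < q.1 ^ 2 + q.2 ^ 2 ∧ q.1 ^ 2 + q.2 ^ 2 ≤ 1}
        ∩ bmT ⁻¹' A) ∩ Set.Ioo (-1 : ℝ) 1 ×ˢ Set.Ioo (-1 : ℝ) 1)
      = volume (bmD ∩ bmT ⁻¹' A) := bm_vol_congr _
  have h2 : volume ({q : ℝ × ℝ | 0 < q.1 ^ 2 + q.2 ^ 2 ∧ q.1 ^ 2 + q.2 ^ 2 ≤ 1}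
        ∩ Set.Ioo (-1 : ℝ) 1 ×ˢ Set.Ioo (-1 : ℝ) 1) = ENNReal.ofReal π := by
    have h3 := bm_vol_congr Set.univ
    rw [Set.inter_univ, Set.inter_univ] at h3
    rw [h3, bm_vol_D]
  rw [h1, h2]
  -- arithmetic
  have hπ0 : ENNReal.ofReal π ≠ 0 := by
    simp [ENNReal.ofReal_eq_zero, not_le, Real.pi_pos]
  have hπt : ENNReal.ofReal π ≠ ⊤ := ENNReal.ofReal_ne_top
  rw [ENNReal.mul_inv (Or.inl (by norm_num)) (Or.inl (by norm_num))]
  rw [inv_inv, ← ENNReal.ofReal_inv_of_pos Real.pi_pos]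
  calc 4 * (ENNReal.ofReal π⁻¹) * (4⁻¹ * volume (bmD ∩ bmT ⁻¹' A))
      = (4 * 4⁻¹) * (ENNReal.ofReal π⁻¹ * volume (bmD ∩ bmT ⁻¹' A)) := by ring
    _ = ENNReal.ofReal π⁻¹ * volume (bmD ∩ bmT ⁻¹' A) := by
        rw [ENNReal.mul_inv_cancel (by norm_num) (by norm_num), one_mul]
end Part3
end
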